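/- Let n ≥ 1 and 0 ≤ θ < π/2 with tan(θ/2) < 2^{1/n} − 1. With Ψ_x ∈ ℂ^{2^n} defined by Ψ_x(r) = (−1)^{x·r} cos(θ/2)^{n−|r|} sin(θ/2)^{|r|}, for every measurement (POVM) {M_x}_{x∈{0,1}^n} on ℂ^{2^n} one has ∑_{x∈{0,1}^n} 2^{−n} ⟨Ψ_x| M_x |Ψ_x⟩ ≥ 2^{−n} cos(θ/2)^{2n} (2 − (1 + tan(θ/2))^n)² > 0. In particular, conclusive exclusion of the states {Ψ_x} is impossible when tan(θ/2) < 2^{1/n} − 1, and the projective measurement {|ζ_x⟩⟨ζ_x|}, with ζ_x(0⃗) = 1/√(2^n) and ζ_x(r) = −(−1)^{x·r}/√(2^n) for r ≠ 0⃗, attains this bound with equality and is therefore optimal. (Quantum bound for the PBR game.) -/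

import Mathlib

/-!
All `Ψ x` have the same moduli `ψ r = cos(θ/2)^(n-|r|) sin(θ/2)^|r|`, and the margin
`β = ψ 0 - ∑_{r ≠ 0} ψ r = cos(θ/2)^n (2 - (1 + tan(θ/2))^n)` is positive. The diagonal matrix
`D = β · diag(ψ 0, -ψ r (r ≠ 0))` is dual feasible for the discrimination SDP: `Ψ x Ψ xᴴ ⪰ D`
for every `x`, which row by row is the reverse triangle inequality
`|∑ Ψ x r v r| ≥ ψ 0 |v 0| - ∑_{r ≠ 0} ψ r |v r|` combined with Cauchy–Schwarz. Hence
`∑ₓ ⟨Ψₓ|Mₓ|Ψₓ⟩ ≥ ∑ₓ tr (Mₓ D) = tr D = β²` for every POVM. The `ζ x` are the Walsh characters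
twisted by the sign pattern of `D`: they form an orthonormal basis, and `⟨ζₓ|Ψₓ⟩ = β / √(2ⁿ)`
for every `x`, which gives equality.
-/

open BigOperators Matrix ComplexOrder

/-- The dot product `x·r = ∑ᵢ xᵢ rᵢ` of two bit strings. -/
def bdot {n : ℕ} (x r : Fin n → Bool) : ℕ :=
  ∑ i, if x i ∧ r i then 1 else 0

/-- The Hamming weight `|r| = ∑ᵢ rᵢ` of a bit string. -/
def hamming {n : ℕ} (r : Fin n → Bool) : ℕ :=
  ∑ i, if r i then 1 else 0

open Finset

lemma sub_mul_sub_le_sq {p S T x B L : ℝ} (hS : 0 ≤ S) (hSp : S ≤ p) (hT : 0 ≤ T)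
    (hx : 0 ≤ x) (hBST : B ^ 2 ≤ S * T) (hBL : p * x - B ≤ L) :
    (p - S) * (p * x ^ 2 - T) ≤ L ^ 2 := by
  rcases le_or_gt (p * x) B with hle | hlt
  · have hpx : (p * x) ^ 2 ≤ p * T := by nlinarith [mul_nonneg (hS.trans hSp) hx]
    have hp : 0 ≤ p := hS.trans hSp
    rcases hp.eq_or_lt with rfl | hppos
    · nlinarith [sq_nonneg L]
    · have : p * ((p - S) * (p * x ^ 2 - T)) ≤ 0 := by
        nlinarith [mul_nonneg (sub_nonneg.2 hSp) (sub_nonneg.2 hpx)]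
      nlinarith [sq_nonneg L, nonpos_of_mul_nonpos_right this hppos]
  · have hL : (p * x - B) ^ 2 ≤ L ^ 2 := pow_le_pow_left₀ (by linarith) hBL 2
    rcases hS.eq_or_lt with rfl | hSpos
    · have hB0 : B = 0 := by nlinarith
      subst hB0
      nlinarith
    · -- `S` times the gap is `p (S x - B)² + (p - S)(S T - B²)`
      have key : S * ((p - S) * (p * x ^ 2 - T)) ≤ S * (p * x - B) ^ 2 := by
        nlinarith [mul_nonneg (hS.trans hSp) (sq_nonneg (S * x - B)),
          mul_nonneg (sub_nonneg.2 hSp) (sub_nonneg.2 hBST)]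
      nlinarith [le_of_mul_le_mul_left key hSpos]

lemma star_dotProduct_vecMulVec_mulVec {ι : Type*} [Fintype ι] (u w : ι → ℂ) :
    star w ⬝ᵥ (vecMulVec u (star u) *ᵥ w) = (‖star u ⬝ᵥ w‖ ^ 2 : ℝ) := by
  rw [vecMulVec_mulVec, op_smul_eq_smul, dotProduct_smul, smul_eq_mul, Matrix.star_dotProduct,
    Complex.star_def, Complex.conj_mul', Complex.norm_conj, Complex.ofReal_pow]

section SignedSums

variable {ι : Type*} [DecidableEq ι]

def sgnAt (i₀ i : ι) : ℝ := if i = i₀ then 1 else -1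

lemma sgnAt_sq (i₀ i : ι) : sgnAt i₀ i ^ 2 = 1 := by
  unfold sgnAt; split_ifs <;> norm_num

variable [Fintype ι]

lemma sum_sgnAt_mul (i₀ : ι) (f : ι → ℝ) :
    ∑ i, sgnAt i₀ i * f i = f i₀ - ∑ i ∈ univ.erase i₀, f i := by
  rw [← add_sum_erase _ _ (mem_univ i₀), sgnAt, if_pos rfl, one_mul, sub_eq_add_neg,
    ← sum_neg_distrib]
  congr 1
  refine sum_congr rfl fun i hi => ?_
  rw [sgnAt, if_neg (ne_of_mem_erase hi), neg_one_mul]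

lemma sum_sgnAt_mul_eq_two_mul_sub (i₀ : ι) (f : ι → ℝ) :
    ∑ i, sgnAt i₀ i * f i = 2 * f i₀ - ∑ i, f i := by
  rw [sum_sgnAt_mul, ← add_sum_erase _ _ (mem_univ i₀)]
  ring

lemma mul_sum_sgnAt_le_norm_dotProduct_sq (i₀ : ι) (Φ v : ι → ℂ)
    (hΦ : 0 ≤ ∑ i, sgnAt i₀ i * ‖Φ i‖) :
    (∑ i, sgnAt i₀ i * ‖Φ i‖) * ∑ i, sgnAt i₀ i * (‖Φ i‖ * ‖v i‖ ^ 2) ≤ ‖v ⬝ᵥ Φ‖ ^ 2 := by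
  simp only [sum_sgnAt_mul] at hΦ ⊢
  refine sub_mul_sub_le_sq (B := ∑ i ∈ univ.erase i₀, ‖Φ i‖ * ‖v i‖)
    (sum_nonneg fun i _ => norm_nonneg _) (by linarith) (sum_nonneg fun i _ => by positivity)
    (norm_nonneg (v i₀)) ?_ ?_
  · exact sum_sq_le_sum_mul_sum_of_sq_le_mul _ (fun i _ => norm_nonneg _)
      (fun i _ => by positivity) fun i _ => by ring_nf; rfl
  · have hrest : ‖∑ i ∈ univ.erase i₀, v i * Φ i‖ ≤ ∑ i ∈ univ.erase i₀, ‖Φ i‖ * ‖v i‖ :=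
      (norm_sum_le _ _).trans_eq (sum_congr rfl fun i _ => by rw [norm_mul, mul_comm])
    have := norm_sub_le_norm_add (v i₀ * Φ i₀) (∑ i ∈ univ.erase i₀, v i * Φ i)
    rw [norm_mul, add_sum_erase _ (fun i => v i * Φ i) (mem_univ i₀)] at this
    rw [dotProduct]
    linarith

lemma mul_sum_sgnAt_le_re_star_dotProduct_mulVec (i₀ : ι) (Φ : ι → ℂ)
    (hΦ : 0 ≤ ∑ i, sgnAt i₀ i * ‖Φ i‖) {M : Matrix ι ι ℂ} (hM : M.PosSemidef) :
    (∑ i, sgnAt i₀ i * ‖Φ i‖) * ∑ i, sgnAt i₀ i * (‖Φ i‖ * (M i i).re) ≤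
      (star Φ ⬝ᵥ (M *ᵥ Φ)).re := by
  obtain ⟨m, u, rfl⟩ := posSemidef_iff_eq_sum_vecMulVec.mp hM
  have hdiag : ∀ k i, (vecMulVec (u k) (star (u k)) i i).re = ‖star (u k) i‖ ^ 2 := by
    intro k i
    rw [vecMulVec_apply, Pi.star_apply, norm_star, ← Complex.normSq_eq_norm_sq,
      Complex.star_def, Complex.mul_conj, Complex.ofReal_re]
  simp only [Matrix.sum_apply, sum_mulVec, dotProduct_sum, Complex.re_sum, hdiag,
    star_dotProduct_vecMulVec_mulVec, Complex.ofReal_re, mul_sum]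
  rw [sum_comm]
  refine sum_le_sum fun k _ => ?_
  simp only [← mul_sum]
  exact mul_sum_sgnAt_le_norm_dotProduct_sq i₀ Φ (star (u k)) hΦ

lemma sq_sum_sgnAt_le_re_sum_star_dotProduct_mulVec {κ : Type*} [Fintype κ] (i₀ : ι)
    (ψ : ι → ℝ) (hψ : 0 ≤ ∑ i, sgnAt i₀ i * ψ i) (Φ : κ → ι → ℂ) (hΦ : ∀ x i, ‖Φ x i‖ = ψ i)
    (M : κ → Matrix ι ι ℂ) (hM : ∀ x, (M x).PosSemidef) (hsum : ∑ x, M x = 1) :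
    (∑ i, sgnAt i₀ i * ψ i) ^ 2 ≤ (∑ x, star (Φ x) ⬝ᵥ (M x *ᵥ Φ x)).re := by
  have hdiag : ∀ i, ∑ x, (M x i i).re = 1 := fun i => by
    rw [← Complex.re_sum, ← Matrix.sum_apply, hsum, one_apply_eq, Complex.one_re]
  calc (∑ i, sgnAt i₀ i * ψ i) ^ 2
      = ∑ x, (∑ i, sgnAt i₀ i * ψ i) * ∑ i, sgnAt i₀ i * (ψ i * (M x i i).re) := by
        simp only [← mul_sum, sum_comm (γ := κ), hdiag, mul_one, sq]
    _ ≤ ∑ x, (star (Φ x) ⬝ᵥ (M x *ᵥ Φ x)).re := sum_le_sum fun x _ => by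
        simpa only [hΦ] using
          mul_sum_sgnAt_le_re_star_dotProduct_mulVec i₀ (Φ x) (by simpa only [hΦ]) (hM x)
    _ = (∑ x, star (Φ x) ⬝ᵥ (M x *ᵥ Φ x)).re := (Complex.re_sum _ _).symm

end SignedSums

section BitStrings

variable {n : ℕ} {R : Type*}

lemma hamming_zero : hamming (fun _ : Fin n => false) = 0 := by
  simp [hamming]

lemma bdot_zero_right (x : Fin n → Bool) : bdot x (fun _ => false) = 0 := by
  simp [bdot]

lemma sum_prod_bool [CommSemiring R] (g : Fin n → Bool → R) :
    ∑ x : Fin n → Bool, ∏ i, g i (x i) = ∏ i, (g i false + g i true) := by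
  rw [← Fintype.prod_sum]
  simp only [Fintype.sum_bool, add_comm]

lemma prod_ite_eq_pow_hamming [CommMonoid R] (c s : R) (r : Fin n → Bool) :
    ∏ i, (if r i then s else c) = c ^ (n - hamming r) * s ^ hamming r := by
  have hcard : #{i | r i} = hamming r := by rw [card_filter]; rfl
  have hsplit := card_filter_add_card_filter_not (s := univ) (p := fun i => r i = true)
  rw [card_univ, Fintype.card_fin] at hsplit
  rw [prod_ite, prod_const, prod_const, hcard, mul_comm]
  congr 2
  omega

lemma sum_pow_hamming [CommSemiring R] (c s : R) :
    ∑ r : Fin n → Bool, c ^ (n - hamming r) * s ^ hamming r = (c + s) ^ n := by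
  simp_rw [← prod_ite_eq_pow_hamming]
  rw [sum_prod_bool (fun _ b => if b then s else c)]
  simp

lemma sum_neg_one_pow_bdot_mul [CommRing R] (p q : Fin n → Bool) :
    ∑ x : Fin n → Bool, (-1 : R) ^ bdot x p * (-1) ^ bdot x q = if p = q then 2 ^ n else 0 := by
  let g : Fin n → Bool → R := fun i b =>
    (-1) ^ (if b ∧ p i then 1 else 0) * (-1) ^ (if b ∧ q i then 1 else 0)
  have hfactor : ∀ i, g i false + g i true = if p i = q i then 2 else 0 := by
    intro i
    simp only [g]
    cases p i <;> cases q i <;> norm_num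
  calc ∑ x : Fin n → Bool, (-1 : R) ^ bdot x p * (-1) ^ bdot x q
      = ∑ x : Fin n → Bool, ∏ i, g i (x i) := by
        simp only [g, bdot, prod_mul_distrib, prod_pow_eq_pow_sum]
    _ = if p = q then 2 ^ n else 0 := by
        simp only [sum_prod_bool, hfactor, Fintype.prod_ite_zero, prod_const, card_univ,
          Fintype.card_fin, funext_iff]

end BitStrings

section Walsh

variable {n : ℕ}

def walshMul (x : Fin n → Bool) (f : (Fin n → Bool) → ℝ) (r : Fin n → Bool) : ℂ :=
  (-1) ^ bdot x r * f r

lemma norm_walshMul (x : Fin n → Bool) (f : (Fin n → Bool) → ℝ) (r : Fin n → Bool) :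
    ‖walshMul x f r‖ = |f r| := by
  simp [walshMul]

lemma star_walshMul_apply (x : Fin n → Bool) (f : (Fin n → Bool) → ℝ) (r : Fin n → Bool) :
    star (walshMul x f r) = walshMul x f r := by
  simp [walshMul]

lemma walshMul_mul_walshMul (x : Fin n → Bool) (f g : (Fin n → Bool) → ℝ) (r : Fin n → Bool) :
    walshMul x g r * walshMul x f r = (g r * f r : ℝ) := by
  have hsign : (-1 : ℂ) ^ bdot x r * (-1) ^ bdot x r = 1 := by rw [← mul_pow]; norm_num
  simp only [walshMul, Complex.ofReal_mul]
  linear_combination (g r * f r : ℂ) * hsign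

lemma star_walshMul_dotProduct_walshMul (x : Fin n → Bool) (f g : (Fin n → Bool) → ℝ) :
    star (walshMul x g) ⬝ᵥ walshMul x f = (∑ r, g r * f r : ℝ) := by
  simp only [dotProduct, Pi.star_apply, star_walshMul_apply, walshMul_mul_walshMul,
    Complex.ofReal_sum]

lemma sum_vecMulVec_walshMul (f : (Fin n → Bool) → ℝ) (hf : ∀ r, f r ^ 2 = (2 ^ n)⁻¹) :
    ∑ x, vecMulVec (walshMul x f) (star (walshMul x f)) = 1 := by
  ext p q
  calc (∑ x, vecMulVec (walshMul x f) (star (walshMul x f))) p q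
      = (f p * f q : ℂ) * ∑ x : Fin n → Bool, (-1 : ℂ) ^ bdot x p * (-1) ^ bdot x q := by
        simp only [Matrix.sum_apply, vecMulVec_apply, Pi.star_apply, star_walshMul_apply,
          mul_sum]
        exact sum_congr rfl fun x _ => by simp only [walshMul]; ring
    _ = (1 : Matrix (Fin n → Bool) (Fin n → Bool) ℂ) p q := by
        rw [sum_neg_one_pow_bdot_mul]
        split_ifs with hpq
        · subst hpq
          rw [one_apply_eq, ← sq, ← Complex.ofReal_pow, hf]
          push_cast
          exact inv_mul_cancel₀ (by positivity)
        · rw [mul_zero, one_apply_ne hpq]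

lemma walshMul_sgnAt_zero_mul_apply (x : Fin n → Bool) (a : ℝ) (r : Fin n → Bool) :
    walshMul x (fun r => sgnAt (fun _ => false) r * a) r =
      if r = (fun _ => false) then (a : ℂ) else -(-1 : ℂ) ^ bdot x r * a := by
  simp only [walshMul, sgnAt]
  split_ifs with hr
  · rw [hr, bdot_zero_right]; push_cast; ring
  · push_cast; ring

lemma sum_star_walshMul_dotProduct_vecMulVec_mulVec (f g : (Fin n → Bool) → ℝ) :
    ∑ x, star (walshMul x g) ⬝ᵥ (vecMulVec (walshMul x f) (star (walshMul x f)) *ᵥ walshMul x g) =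
      (2 ^ n * (∑ r, f r * g r) ^ 2 : ℝ) := by
  simp only [star_dotProduct_vecMulVec_mulVec, star_walshMul_dotProduct_walshMul,
    Complex.norm_real, Real.norm_eq_abs, sq_abs, sum_const, card_univ, Fintype.card_fun,
    Fintype.card_bool, Fintype.card_fin, nsmul_eq_mul]
  push_cast
  rfl

lemma sum_star_walshMul_dotProduct_vecMulVec_sgnAt_mulVec (ψ : (Fin n → Bool) → ℝ) {a : ℝ}
    (ha : a ^ 2 = (2 ^ n)⁻¹) :
    ∑ x, star (walshMul x ψ) ⬝ᵥ
      (vecMulVec (walshMul x fun r => sgnAt (fun _ => false) r * a)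
        (star (walshMul x fun r => sgnAt (fun _ => false) r * a)) *ᵥ walshMul x ψ) =
      ((∑ r, sgnAt (fun _ => false) r * ψ r) ^ 2 : ℝ) := by
  have hinner : ∑ r, sgnAt (fun _ => false) r * a * ψ r =
      a * ∑ r, sgnAt (fun _ => false) r * ψ r := by
    rw [mul_sum]
    exact sum_congr rfl fun r _ => by ring
  rw [sum_star_walshMul_dotProduct_vecMulVec_mulVec, hinner, mul_pow, ha,
    mul_inv_cancel_left₀ (by positivity)]

end Walsh

lemma re_sum_inv_two_pow_mul {κ : Type*} [Fintype κ] (n : ℕ) (z : κ → ℂ) :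
    (∑ x, ((2 : ℂ) ^ n)⁻¹ * z x).re = (2 ^ n : ℝ)⁻¹ * (∑ x, z x).re := by
  rw [← mul_sum, ← Complex.re_ofReal_mul]
  push_cast
  rfl

lemma sum_sgnAt_mul_pow_hamming {n : ℕ} {c : ℝ} (hc : c ≠ 0) (s : ℝ) :
    ∑ r : Fin n → Bool, sgnAt (fun _ => false) r * (c ^ (n - hamming r) * s ^ hamming r) =
      c ^ n * (2 - (1 + s / c) ^ n) := by
  rw [sum_sgnAt_mul_eq_two_mul_sub, sum_pow_hamming, hamming_zero, Nat.sub_zero, pow_zero,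
    mul_one, ← mul_div_cancel₀ s hc, ← mul_one_add, mul_pow, mul_div_cancel₀ s hc]
  ring

lemma one_add_pow_lt_two {n : ℕ} {t : ℝ} (ht : 0 ≤ t) (h : t < (2 : ℝ) ^ ((n : ℝ)⁻¹) - 1) :
    (1 + t) ^ n < 2 := by
  rcases n.eq_zero_or_pos with rfl | hn
  · norm_num
  calc (1 + t) ^ n < ((2 : ℝ) ^ ((n : ℝ)⁻¹)) ^ n :=
        pow_lt_pow_left₀ (by linarith) (by linarith) hn.ne'
    _ = 2 := by
        rw [← Real.rpow_natCast, ← Real.rpow_mul zero_le_two,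
          inv_mul_cancel₀ (Nat.cast_ne_zero.2 hn.ne'), Real.rpow_one]

theorem pbr_game_quantum_bound_general
    {n : ℕ} (θ : ℝ) (hθ0 : 0 ≤ θ) (hθ1 : θ < Real.pi / 2)
    (hθ2 : Real.tan (θ / 2) < (2 : ℝ) ^ ((n : ℝ)⁻¹) - 1)
    (Ψ ζ : (Fin n → Bool) → (Fin n → Bool) → ℂ)
    (hΨ : ∀ x r, Ψ x r = (-1 : ℂ) ^ bdot x r *
      ((Real.cos (θ / 2) ^ (n - hamming r) * Real.sin (θ / 2) ^ hamming r : ℝ) : ℂ))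
    (hζ : ∀ x r, ζ x r =
      if r = (fun _ => false) then ((1 / Real.sqrt (2 ^ n) : ℝ) : ℂ)
      else -(-1 : ℂ) ^ bdot x r * ((1 / Real.sqrt (2 ^ n) : ℝ) : ℂ)) :
    (∀ M : (Fin n → Bool) → Matrix (Fin n → Bool) (Fin n → Bool) ℂ,
      (∀ x, (M x).PosSemidef) → (∑ x, M x = 1) →
      (2 ^ n : ℝ)⁻¹ * Real.cos (θ / 2) ^ (2 * n) * (2 - (1 + Real.tan (θ / 2)) ^ n) ^ 2 ≤
        (∑ x, ((2 : ℂ) ^ n)⁻¹ * (star (Ψ x) ⬝ᵥ (M x *ᵥ Ψ x))).re) ∧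
    0 < (2 ^ n : ℝ)⁻¹ * Real.cos (θ / 2) ^ (2 * n) * (2 - (1 + Real.tan (θ / 2)) ^ n) ^ 2 ∧
    (∀ x, (Matrix.vecMulVec (ζ x) (fun q => (starRingEnd ℂ) (ζ x q))).PosSemidef) ∧
    (∑ x, Matrix.vecMulVec (ζ x) (fun q => (starRingEnd ℂ) (ζ x q)) = 1) ∧
    (∑ x, ((2 : ℂ) ^ n)⁻¹ *
        (star (Ψ x) ⬝ᵥ (Matrix.vecMulVec (ζ x) (fun q => (starRingEnd ℂ) (ζ x q)) *ᵥ Ψ x))).re =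
      (2 ^ n : ℝ)⁻¹ * Real.cos (θ / 2) ^ (2 * n) * (2 - (1 + Real.tan (θ / 2)) ^ n) ^ 2 := by
  set c := Real.cos (θ / 2)
  set s := Real.sin (θ / 2)
  set m := 1 / Real.sqrt (2 ^ n)
  set ψ : (Fin n → Bool) → ℝ := fun r => c ^ (n - hamming r) * s ^ hamming r
  set β := ∑ r, sgnAt (fun _ => false) r * ψ r
  have hc : 0 < c := Real.cos_pos_of_mem_Ioo ⟨by linarith [Real.pi_pos], by linarith⟩
  have hs : 0 ≤ s := Real.sin_nonneg_of_nonneg_of_le_pi (by linarith) (by linarith [Real.pi_pos])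
  have hβ : β = c ^ n * (2 - (1 + Real.tan (θ / 2)) ^ n) := by
    rw [Real.tan_eq_sin_div_cos]
    exact sum_sgnAt_mul_pow_hamming hc.ne' s
  have hβpos : 0 < β := hβ ▸ mul_pos (pow_pos hc n) (sub_pos.2 (one_add_pow_lt_two
    (Real.tan_nonneg_of_nonneg_of_le_pi_div_two (by linarith) (by linarith)) hθ2))
  have hm : m ^ 2 = (2 ^ n)⁻¹ := by
    rw [div_pow, Real.sq_sqrt (by positivity), one_pow, one_div]
  obtain rfl : Ψ = fun x => walshMul x ψ := funext fun x => funext (hΨ x)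
  obtain rfl : ζ = fun x => walshMul x (fun r => sgnAt (fun _ => false) r * m) :=
    funext fun x => funext fun r => by rw [hζ, walshMul_sgnAt_zero_mul_apply]
  rw [show (2 ^ n : ℝ)⁻¹ * c ^ (2 * n) * (2 - (1 + Real.tan (θ / 2)) ^ n) ^ 2 =
    (2 ^ n : ℝ)⁻¹ * β ^ 2 by rw [hβ]; ring]
  refine ⟨fun M hM hsum => ?_, by positivity, fun x => posSemidef_vecMulVec_self_star _,
    sum_vecMulVec_walshMul _ fun r => by rw [mul_pow, sgnAt_sq, one_mul, hm], ?_⟩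
  · rw [re_sum_inv_two_pow_mul]
    gcongr
    exact sq_sum_sgnAt_le_re_sum_star_dotProduct_mulVec _ ψ hβpos.le _
      (fun x r => by rw [norm_walshMul, abs_of_nonneg (by positivity)]) M hM hsum
  · rw [re_sum_inv_two_pow_mul]
    -- `ζ x` enters the statement through its pointwise conjugate rather than `star (ζ x)`
    erw [sum_star_walshMul_dotProduct_vecMulVec_sgnAt_mulVec ψ hm, Complex.ofReal_re]

/-- Quantum bound for the PBR game: when `tan(θ/2) < 2^{1/n} - 1`, every POVM
`{Mₓ}` has exclusion error `∑ₓ 2^{-n} ⟨Ψₓ|Mₓ|Ψₓ⟩` at least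
`2^{-n} cos(θ/2)^{2n} (2 - (1 + tan(θ/2))^n)² > 0`, so conclusive exclusion is
impossible; moreover the projective measurement `{|ζₓ⟩⟨ζₓ|}` is a valid
measurement attaining this bound with equality, and is therefore optimal. -/
theorem pbr_game_quantum_bound
    {n : ℕ} (hn : 1 ≤ n) (θ : ℝ) (hθ0 : 0 ≤ θ) (hθ1 : θ < Real.pi / 2)
    (hθ2 : Real.tan (θ / 2) < (2 : ℝ) ^ ((n : ℝ)⁻¹) - 1)
    (Ψ ζ : (Fin n → Bool) → (Fin n → Bool) → ℂ)
    (hΨ : ∀ x r, Ψ x r = (-1 : ℂ) ^ bdot x r *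
      ((Real.cos (θ / 2) ^ (n - hamming r) * Real.sin (θ / 2) ^ hamming r : ℝ) : ℂ))
    (hζ : ∀ x r, ζ x r =
      if r = (fun _ => false) then ((1 / Real.sqrt (2 ^ n) : ℝ) : ℂ)
      else -(-1 : ℂ) ^ bdot x r * ((1 / Real.sqrt (2 ^ n) : ℝ) : ℂ)) :
    (∀ M : (Fin n → Bool) → Matrix (Fin n → Bool) (Fin n → Bool) ℂ,
      (∀ x, (M x).PosSemidef) → (∑ x, M x = 1) →
      (2 ^ n : ℝ)⁻¹ * Real.cos (θ / 2) ^ (2 * n) * (2 - (1 + Real.tan (θ / 2)) ^ n) ^ 2 ≤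
        (∑ x, ((2 : ℂ) ^ n)⁻¹ * (star (Ψ x) ⬝ᵥ (M x *ᵥ Ψ x))).re) ∧
    0 < (2 ^ n : ℝ)⁻¹ * Real.cos (θ / 2) ^ (2 * n) * (2 - (1 + Real.tan (θ / 2)) ^ n) ^ 2 ∧
    (∀ x, (Matrix.vecMulVec (ζ x) (fun q => (starRingEnd ℂ) (ζ x q))).PosSemidef) ∧
    (∑ x, Matrix.vecMulVec (ζ x) (fun q => (starRingEnd ℂ) (ζ x q)) = 1) ∧
    (∑ x, ((2 : ℂ) ^ n)⁻¹ *
        (star (Ψ x) ⬝ᵥ (Matrix.vecMulVec (ζ x) (fun q => (starRingEnd ℂ) (ζ x q)) *ᵥ Ψ x))).re =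
      (2 ^ n : ℝ)⁻¹ * Real.cos (θ / 2) ^ (2 * n) * (2 - (1 + Real.tan (θ / 2)) ^ n) ^ 2 :=
  pbr_game_quantum_bound_general θ hθ0 hθ1 hθ2 Ψ ζ hΨ hζ
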